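/- arXiv:1208.5730 — 3 statements merged into one kernel-verified Lean document; each statement's English description precedes it below -/
import Mathlib

section
/- Let R be a commutative Noetherian local ring, let x, y ∈ R and let n ≥ 0 be an integer. For a finitely generated R-module M, the following are equivalent: (1) there is a short exact sequence of R-modules 0 → (R/(x))^n → M → R/(y) → 0; (2) there exist elements a₁, …, aₙ of the ideal quotient ((x) : (0 : y)) and an exact sequence R^{n+1} → R^{n+1} → M → 0 in which the first map is given by the matrix T(x, y, a₁, …, aₙ). -/
open CategoryTheory

universe u

/-- A finitely generated module `M` over a commutative Noetherian local ring `R` is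
*totally reflexive* if the natural evaluation map `M → Hom_R(Hom_R(M,R),R)` is an
isomorphism and `Ext_R^i(M, R) = 0 = Ext_R^i(Hom_R(M,R), R)` for all `i > 0`. -/
def IsTotallyReflexive (R : Type u) [CommRing R] (M : Type u) [AddCommGroup M]
    [Module R M] : Prop :=
  Module.Finite R M ∧
  Function.Bijective (Module.Dual.eval R M) ∧
  (∀ i : ℕ, 0 < i →
    Subsingleton (((Ext R (ModuleCat.{u} R) i).obj
      (Opposite.op (ModuleCat.of R M))).obj (ModuleCat.of R R))) ∧
  (∀ i : ℕ, 0 < i →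
    Subsingleton (((Ext R (ModuleCat.{u} R) i).obj
      (Opposite.op (ModuleCat.of R (Module.Dual R M)))).obj (ModuleCat.of R R)))

/-- A commutative Noetherian local ring is *G-regular* if every totally reflexive
module over it is free. -/
def IsGRegular (R : Type u) [CommRing R] : Prop :=
  ∀ (M : Type u) (_ : AddCommGroup M) (_ : Module R M),
    IsTotallyReflexive R M → Module.Free R M

/-- `{x, y}` is a *pair of exact zerodivisors* of the local ring `R` if `x` and `y` are
nonunits (i.e. belong to the maximal ideal) with `(0 : x) = (y)` and `(0 : y) = (x)`. -/
def IsExactZerodivisorPair (R : Type u) [CommRing R] (x y : R) : Prop :=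
  ¬ IsUnit x ∧ ¬ IsUnit y ∧
  (∀ r : R, r * x = 0 ↔ r ∈ Ideal.span {y}) ∧
  (∀ r : R, r * y = 0 ↔ r ∈ Ideal.span {x})

/-- An `R`-module `M` is *indecomposable* if `M ≠ 0` and `M` is not isomorphic to the
direct sum of two nonzero `R`-modules (equivalently, `M` has no pair of complementary
nonzero submodules). -/
def IsIndecomposable (R : Type u) [CommRing R] (M : Type*) [AddCommGroup M]
    [Module R M] : Prop :=
  Nontrivial M ∧
  ¬ ∃ P Q : Submodule R M, IsCompl P Q ∧ P ≠ ⊥ ∧ Q ≠ ⊥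

/-- The minimal number of generators of an ideal. -/
noncomputable def nu (A : Type u) [CommRing A] (J : Ideal A) : ℕ :=
  sInf {n : ℕ | ∃ s : Finset A, s.card = n ∧ Ideal.span (s : Set A) = J}

/-- The invariant `s(x,y)`: the supremum in `ℕ ∪ {∞}` of the numbers
`ν_{R/(x,y)}(I(R/(x,y)))` over all ideals `I` of `R`. -/
noncomputable def sInvariant (R : Type u) [CommRing R] (x y : R) : ℕ∞ :=
  ⨆ I : Ideal R,
    (nu (R ⧸ Ideal.span {x, y}) (I.map (Ideal.Quotient.mk (Ideal.span {x, y}))) : ℕ∞)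

/-- The height of an ideal: the infimum of the heights of the prime ideals containing it. -/
noncomputable def idealHeight (A : Type u) [CommRing A] (J : Ideal A) : ℕ∞ :=
  ⨅ p : {p : PrimeSpectrum A // J ≤ p.asIdeal}, Order.height p.1

/-- The `(n+1) × (n+1)` matrix `T(x, y, a₁, …, aₙ)`, with `x` on the first `n` diagonal
entries, `y` in the lower-right corner, the `aᵢ` in the last column, and zeros elsewhere. -/
def Tmatrix {R : Type u} [CommRing R] (n : ℕ) (x y : R) (a : Fin n → R) :
    Matrix (Fin (n + 1)) (Fin (n + 1)) R :=
  Matrix.of fun i j =>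
    if hi : (i : ℕ) < n then
      if (j : ℕ) < n then (if i = j then x else 0) else a ⟨i, hi⟩
    else
      if (j : ℕ) < n then 0 else y

/-!
Given the extension, pick `m₀ ∈ M` mapping to `1 ∈ R/(y)`. Then `y m₀` lies in the image of
`(R/(x))ⁿ`, say `-y m₀ = f(b̄)`, and `w ↦ f(w̄₁, …, w̄ₙ) + w_{n+1} m₀` maps `R^{n+1}` onto `M`
with kernel the image of `T(x, y, b)`; injectivity of `f` forces `b_i (0 : y) ⊆ (x)`.
Conversely, `w` lies in the image of `T(x, y, a)` iff `w_{n+1} = y s` and `w_i ≡ a_i s mod x`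
for some `s`. Hence the last coordinate descends to `M → R/(y)` and the first `n` coordinates
to `(R/(x))ⁿ → M`, which is injective because `a_i (0 : y) ⊆ (x)`.
-/

open Function LinearMap
open scoped Matrix

lemma LinearMap.exists_comp_eq_of_surjective_of_ker_le {R M N P : Type*} [Ring R]
    [AddCommGroup M] [Module R M] [AddCommGroup N] [Module R N] [AddCommGroup P] [Module R P]
    {q : M →ₗ[R] N} {h : M →ₗ[R] P} (hq : Surjective q) (hle : ker q ≤ ker h) :
    ∃ h' : N →ₗ[R] P, h' ∘ₗ q = h :=
  ⟨(ker q).liftQ h hle ∘ₗ (q.quotKerEquivOfSurjective hq).symm.toLinearMap, by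
    ext m
    simp⟩

@[simp]
lemma Fin.extend_castSucc_apply_castSucc {n : ℕ} {α : Type*} (u : Fin n → α)
    (e : Fin (n + 1) → α) (i : Fin n) : extend Fin.castSucc u e i.castSucc = u i :=
  (Fin.castSucc_injective n).extend_apply u e i

@[simp]
lemma Fin.extend_castSucc_apply_last {n : ℕ} {α : Type*} (u : Fin n → α)
    (e : Fin (n + 1) → α) : extend Fin.castSucc u e (Fin.last n) = e (Fin.last n) :=
  extend_apply' u e _ fun ⟨i, hi⟩ => Fin.castSucc_ne_last i hi

lemma Ideal.Quotient.exists_mk_apply_eq {R ι : Type*} [CommRing R] {I : Ideal R}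
    (v : ι → R ⧸ I) : ∃ u : ι → R, (fun i => Ideal.Quotient.mk I (u i)) = v :=
  Ideal.Quotient.mk_surjective.comp_left v

section Tmatrix

variable {R : Type u} [CommRing R] {n : ℕ} {x y : R} {a : Fin n → R}

lemma Tmatrix_mulVec_last (w : Fin (n + 1) → R) :
    (Tmatrix n x y a *ᵥ w) (Fin.last n) = y * w (Fin.last n) := by
  simp [Matrix.mulVec, dotProduct, Tmatrix, Fin.sum_univ_castSucc]

lemma Tmatrix_mulVec_castSucc (w : Fin (n + 1) → R) (i : Fin n) :
    (Tmatrix n x y a *ᵥ w) i.castSucc = x * w i.castSucc + a i * w (Fin.last n) := by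
  simp [Matrix.mulVec, dotProduct, Tmatrix, Fin.sum_univ_castSucc, Fin.castSucc_inj]

lemma mem_range_Tmatrix_iff {w : Fin (n + 1) → R} :
    w ∈ range (Matrix.toLin' (Tmatrix n x y a)) ↔
      ∃ s, w (Fin.last n) = y * s ∧ ∀ i, w i.castSucc - a i * s ∈ Ideal.span {x} := by
  simp only [LinearMap.mem_range, Matrix.toLin'_apply, Ideal.mem_span_singleton']
  constructor
  · rintro ⟨w', rfl⟩
    refine ⟨w' (Fin.last n), Tmatrix_mulVec_last w', fun i => ⟨w' i.castSucc, ?_⟩⟩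
    rw [Tmatrix_mulVec_castSucc]
    ring
  · rintro ⟨s, hlast, hinit⟩
    choose t ht using hinit
    refine ⟨Fin.snoc t s, funext fun j => Fin.lastCases ?_ (fun i => ?_) j⟩
    · rw [Tmatrix_mulVec_last, Fin.snoc_last, hlast]
    · rw [Tmatrix_mulVec_castSucc, Fin.snoc_castSucc, Fin.snoc_last]
      linear_combination ht i

end Tmatrix

section

variable {R : Type u} [CommRing R] {M : Type*} [AddCommGroup M] [Module R M] {n : ℕ} {x y : R}

lemma mem_colon_annihilator_iff {c : R} :
    c ∈ (Ideal.span {x}).colon ((⊥ : Ideal R).colon (Ideal.span {y})) ↔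
      ∀ r, r * y = 0 → c * r ∈ Ideal.span {x} := by
  simp [Submodule.mem_colon, mul_comm]

def presentationOfExtension (f : (Fin n → R ⧸ Ideal.span {x}) →ₗ[R] M) (m₀ : M) :
    (Fin (n + 1) → R) →ₗ[R] M :=
  f ∘ₗ (Ideal.span {x}).mkQ.compLeft (Fin n) ∘ₗ funLeft R R Fin.castSucc +
    toSpanSingleton R M m₀ ∘ₗ proj (Fin.last n)

lemma presentationOfExtension_apply (f : (Fin n → R ⧸ Ideal.span {x}) →ₗ[R] M) (m₀ : M)
    (w : Fin (n + 1) → R) :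
    presentationOfExtension f m₀ w =
      f (fun i => Ideal.Quotient.mk _ (w i.castSucc)) + w (Fin.last n) • m₀ :=
  rfl

variable {f : (Fin n → R ⧸ Ideal.span {x}) →ₗ[R] M} {g : M →ₗ[R] R ⧸ Ideal.span {y}}
  {m₀ : M} {b : Fin n → R}

lemma mem_colon_of_extension (hf : Injective f)
    (hb : f (fun i => Ideal.Quotient.mk _ (b i)) = -(y • m₀)) (i : Fin n) :
    b i ∈ (Ideal.span {x}).colon ((⊥ : Ideal R).colon (Ideal.span {y})) := by
  refine mem_colon_annihilator_iff.2 fun r hr => ?_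
  have : r • (fun i => Ideal.Quotient.mk (Ideal.span {x}) (b i)) = 0 :=
    hf <| by rw [map_smul, hb, map_zero, smul_neg, smul_smul, hr, zero_smul, neg_zero]
  simpa [Algebra.smul_def, ← map_mul, Ideal.Quotient.eq_zero_iff_mem, mul_comm] using
    congrFun this i

lemma surjective_presentationOfExtension (hfg : range f = ker g) (hm₀ : g m₀ = 1) :
    Surjective (presentationOfExtension f m₀) := by
  intro m
  obtain ⟨c, hc⟩ := Ideal.Quotient.mk_surjective (g m)
  obtain ⟨v, hv⟩ : m - c • m₀ ∈ range f := by
    rw [hfg, mem_ker, map_sub, map_smul, hm₀, ← hc, Algebra.smul_def, mul_one]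
    exact sub_self _
  obtain ⟨u, rfl⟩ := Ideal.Quotient.exists_mk_apply_eq v
  refine ⟨Fin.snoc u c, ?_⟩
  simp only [presentationOfExtension_apply, Fin.snoc_castSucc, Fin.snoc_last]
  exact hv ▸ sub_add_cancel m _

lemma ker_presentationOfExtension (hf : Injective f) (hfg : range f = ker g) (hm₀ : g m₀ = 1)
    (hb : f (fun i => Ideal.Quotient.mk _ (b i)) = -(y • m₀)) :
    ker (presentationOfExtension f m₀) = range (Matrix.toLin' (Tmatrix n x y b)) := by
  have hbs (s : R) : f (fun i => Ideal.Quotient.mk _ (b i * s)) = -((y * s) • m₀) := by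
    have : (fun i => Ideal.Quotient.mk (Ideal.span {x}) (b i * s)) =
        s • fun i => Ideal.Quotient.mk _ (b i) := by
      ext i
      simp [Algebra.smul_def, mul_comm]
    rw [this, map_smul, hb]
    module
  ext w
  rw [mem_ker, mem_range_Tmatrix_iff, presentationOfExtension_apply]
  constructor
  · intro hw
    have hlast : Ideal.Quotient.mk (Ideal.span {y}) (w (Fin.last n)) = 0 := by
      have hgf (v) : g (f v) = 0 := mem_ker.1 (hfg ▸ mem_range_self f _)
      simpa [hgf, hm₀, Algebra.smul_def] using congrArg g hw
    obtain ⟨s, hs⟩ := Ideal.mem_span_singleton'.1 (Ideal.Quotient.eq_zero_iff_mem.1 hlast)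
    have hinit : (fun i => Ideal.Quotient.mk (Ideal.span {x}) (w i.castSucc)) =
        fun i => Ideal.Quotient.mk _ (b i * s) :=
      hf <| by rw [hbs, eq_neg_of_add_eq_zero_left hw, ← hs, mul_comm]
    exact ⟨s, by rw [← hs, mul_comm], fun i => Ideal.Quotient.eq.1 (congrFun hinit i)⟩
  · rintro ⟨s, hs, hw⟩
    have hinit : (fun i => Ideal.Quotient.mk (Ideal.span {x}) (w i.castSucc)) =
        fun i => Ideal.Quotient.mk _ (b i * s) :=
      funext fun i => Ideal.Quotient.eq.2 (hw i)
    rw [hinit, hbs, hs, neg_add_cancel]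

lemma exists_Tmatrix_presentation_of_extension (hf : Injective f) (hg : Surjective g)
    (hfg : range f = ker g) :
    ∃ a : Fin n → R, (∀ i, a i ∈ (Ideal.span {x}).colon ((⊥ : Ideal R).colon (Ideal.span {y}))) ∧
      ∃ p : (Fin (n + 1) → R) →ₗ[R] M,
        Surjective p ∧ ker p = range (Matrix.toLin' (Tmatrix n x y a)) := by
  obtain ⟨m₀, hm₀⟩ := hg 1
  obtain ⟨v, hv⟩ : -(y • m₀) ∈ range f := by
    simp [hfg, hm₀, Algebra.smul_def]
  obtain ⟨b, rfl⟩ := Ideal.Quotient.exists_mk_apply_eq v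
  exact ⟨b, mem_colon_of_extension hf hv, presentationOfExtension f m₀,
    surjective_presentationOfExtension hfg hm₀, ker_presentationOfExtension hf hfg hm₀ hv⟩

end

section

variable {R : Type u} [CommRing R] {M : Type*} [AddCommGroup M] [Module R M] {n : ℕ} {x y : R}
  {a : Fin n → R} {p : (Fin (n + 1) → R) →ₗ[R] M}

lemma exists_comp_mkQ_eq_comp_extendByZero
    (hker : ker p = range (Matrix.toLin' (Tmatrix n x y a))) :
    ∃ f : (Fin n → R ⧸ Ideal.span {x}) →ₗ[R] M,
      f ∘ₗ (Ideal.span {x}).mkQ.compLeft (Fin n) = p ∘ₗ ExtendByZero.linearMap R Fin.castSucc := by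
  refine exists_comp_eq_of_surjective_of_ker_le Ideal.Quotient.mk_surjective.comp_left ?_
  intro u hu
  rw [mem_ker, LinearMap.comp_apply, ← mem_ker, hker, mem_range_Tmatrix_iff]
  refine ⟨0, by simp, fun i => ?_⟩
  simpa [Ideal.Quotient.eq_zero_iff_mem] using congrFun hu i

lemma exists_comp_eq_mkQ_comp_proj_last (hp : Surjective p)
    (hker : ker p = range (Matrix.toLin' (Tmatrix n x y a))) :
    ∃ g : M →ₗ[R] R ⧸ Ideal.span {y},
      g ∘ₗ p = (Ideal.span {y}).mkQ ∘ₗ proj (Fin.last n) := by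
  refine exists_comp_eq_of_surjective_of_ker_le hp fun w hw => ?_
  obtain ⟨s, hs, -⟩ := mem_range_Tmatrix_iff.1 (hker ▸ hw)
  simp [hs]

lemma exists_extension_of_Tmatrix_presentation
    (ha : ∀ i, a i ∈ (Ideal.span {x}).colon ((⊥ : Ideal R).colon (Ideal.span {y})))
    (hp : Surjective p) (hker : ker p = range (Matrix.toLin' (Tmatrix n x y a))) :
    ∃ (f : (Fin n → R ⧸ Ideal.span {x}) →ₗ[R] M) (g : M →ₗ[R] R ⧸ Ideal.span {y}),
      Injective f ∧ Surjective g ∧ range f = ker g := by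
  obtain ⟨f, hf⟩ := exists_comp_mkQ_eq_comp_extendByZero hker
  obtain ⟨g, hg⟩ := exists_comp_eq_mkQ_comp_proj_last hp hker
  have hf' (u : Fin n → R) :
      f (fun i => Ideal.Quotient.mk _ (u i)) = p (extend Fin.castSucc u 0) :=
    LinearMap.congr_fun hf u
  have hg' (w : Fin (n + 1) → R) : g (p w) = Ideal.Quotient.mk _ (w (Fin.last n)) :=
    LinearMap.congr_fun hg w
  refine ⟨f, g, (injective_iff_map_eq_zero f).2 fun v hv => ?_, ?_, ?_⟩
  · obtain ⟨u, rfl⟩ := Ideal.Quotient.exists_mk_apply_eq v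
    rw [hf', ← mem_ker, hker, mem_range_Tmatrix_iff] at hv
    obtain ⟨s, hs, hu⟩ := hv
    ext i
    have has : a i * s ∈ Ideal.span {x} :=
      mem_colon_annihilator_iff.1 (ha i) s (by simpa [mul_comm, eq_comm] using hs)
    simpa [Ideal.Quotient.eq_zero_iff_mem] using add_mem (hu i) has
  · refine Surjective.of_comp (g := p) ?_
    rw [← coe_comp, hg, coe_comp]
    exact (Submodule.mkQ_surjective _).comp (proj_surjective _)
  · ext m
    constructor
    · rintro ⟨v, rfl⟩
      obtain ⟨u, rfl⟩ := Ideal.Quotient.exists_mk_apply_eq v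
      simp [hf', hg']
    · intro hm
      obtain ⟨w, rfl⟩ := hp m
      obtain ⟨s, hs⟩ := Ideal.mem_span_singleton'.1 <|
        Ideal.Quotient.eq_zero_iff_mem.1 ((hg' w).symm.trans hm)
      refine ⟨fun i => Ideal.Quotient.mk _ (w i.castSucc - a i * s), ?_⟩
      rw [hf', eq_comm, ← sub_eq_zero, ← map_sub, ← mem_ker, hker, mem_range_Tmatrix_iff]
      exact ⟨s, by simp [← hs, mul_comm], fun i => by simp⟩

end

theorem extension_iff_Tmatrix_presentation_general (R : Type u) [CommRing R] (x y : R) (n : ℕ)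
    (M : Type u) [AddCommGroup M] [Module R M] :
    (∃ (f : (Fin n → R ⧸ Ideal.span ({x} : Set R)) →ₗ[R] M)
       (g : M →ₗ[R] R ⧸ Ideal.span ({y} : Set R)),
      Function.Injective f ∧ Function.Surjective g ∧
      LinearMap.range f = LinearMap.ker g) ↔
    (∃ a : Fin n → R,
      (∀ i, a i ∈ (Ideal.span ({x} : Set R)).colon
        ((⊥ : Ideal R).colon (Ideal.span ({y} : Set R)))) ∧
      ∃ p : (Fin (n + 1) → R) →ₗ[R] M,
        Function.Surjective p ∧
        LinearMap.ker p = LinearMap.range (Matrix.toLin' (Tmatrix n x y a))) :=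
  ⟨fun ⟨_, _, hf, hg, hfg⟩ => exists_Tmatrix_presentation_of_extension hf hg hfg,
    fun ⟨_, ha, _, hp, hker⟩ => exists_extension_of_Tmatrix_presentation ha hp hker⟩

/-- **Lemma 3.3.**  Let `R` be a commutative Noetherian local ring, `x, y ∈ R` and `n ≥ 0`.
For a finitely generated `R`-module `M` the following are equivalent: (1) there is an exact
sequence `0 → (R/(x))^n → M → R/(y) → 0`; (2) there is an exact sequence
`R^{n+1} → R^{n+1} → M → 0` whose first map is given by the matrix `T(x,y,a₁,…,aₙ)` for
some `a₁, …, aₙ ∈ ((x) : (0 : y))`. -/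
theorem extension_iff_Tmatrix_presentation (R : Type u) [CommRing R] [IsNoetherianRing R]
    [IsLocalRing R] (x y : R) (n : ℕ)
    (M : Type u) [AddCommGroup M] [Module R M] [Module.Finite R M] :
    (∃ (f : (Fin n → R ⧸ Ideal.span ({x} : Set R)) →ₗ[R] M)
       (g : M →ₗ[R] R ⧸ Ideal.span ({y} : Set R)),
      Function.Injective f ∧ Function.Surjective g ∧
      LinearMap.range f = LinearMap.ker g) ↔
    (∃ a : Fin n → R,
      (∀ i, a i ∈ (Ideal.span ({x} : Set R)).colon
        ((⊥ : Ideal R).colon (Ideal.span ({y} : Set R)))) ∧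
      ∃ p : (Fin (n + 1) → R) →ₗ[R] M,
        Function.Surjective p ∧
        LinearMap.ker p = LinearMap.range (Matrix.toLin' (Tmatrix n x y a))) :=
  extension_iff_Tmatrix_presentation_general R x y n M
end

section
/- Let (R, m, k) be a commutative Noetherian local ring and let x, y ∈ m. For any integer n > s(x,y) and any short exact sequence of R-modules 0 → (R/(x))^n → M → R/(y) → 0, the module M has a direct summand isomorphic to R/(x); in particular, M is decomposable. -/
open CategoryTheory

universe u

open Submodule Set

lemma nakayama_step (R : Type u) [CommRing R] [IsLocalRing R] (x y : R)
    (hx : x ∈ IsLocalRing.maximalIdeal R) (hy : y ∈ IsLocalRing.maximalIdeal R)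
    (n : ℕ) (hn : sInvariant R x y < (n : ℕ∞)) (a : Fin n → R) :
    ∃ i : Fin n, ∃ r : Fin n → R, r i = 0 ∧ ∃ α β : R,
      a i = (∑ j, r j * a j) + α * x + β * y := by
  classical
  set A := R ⧸ Ideal.span ({x, y} : Set R) with hA
  set π : R →+* A := Ideal.Quotient.mk (Ideal.span ({x, y} : Set R)) with hπ
  have hxyle : Ideal.span ({x, y} : Set R) ≤ IsLocalRing.maximalIdeal R := by
    rw [Ideal.span_le]; rintro z (rfl | rfl) <;> assumption
  have hxyT : Ideal.span ({x, y} : Set R) ≠ ⊤ := fun h =>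
    (IsLocalRing.maximalIdeal.isMaximal R).ne_top (top_le_iff.mp (h ▸ hxyle))
  haveI : Nontrivial A := Ideal.Quotient.nontrivial_iff.mpr hxyT
  haveI : IsLocalRing A := IsLocalRing.of_surjective' π Ideal.Quotient.mk_surjective
  set v : Fin n → A := fun j => π (a j) with hv
  set J : Ideal A := Ideal.span (Set.range v) with hJ
  have hJm : J = Ideal.map π (Ideal.span (Set.range a)) := by
    rw [Ideal.map_span, ← Set.range_comp]; rfl
  have hnu : nu A J < n := by
    have h1 : (nu A J : ℕ∞) ≤ sInvariant R x y := by
      rw [hJm, sInvariant]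
      exact le_iSup (fun I : Ideal R =>
        (nu A (I.map π) : ℕ∞)) (Ideal.span (Set.range a))
    exact_mod_cast h1.trans_lt hn
  have hne : {m : ℕ | ∃ s : Finset A, s.card = m ∧ Ideal.span (s : Set A) = J}.Nonempty := by
    refine ⟨(Finset.image v Finset.univ).card, Finset.image v Finset.univ, rfl, ?_⟩
    rw [Finset.coe_image, Finset.coe_univ, Set.image_univ]
  obtain ⟨t, htc, hts⟩ := Nat.sInf_mem hne
  have htn : t.card < n := htc ▸ hnu
  -- the residue field and the quotient vector space
  set 𝔪 : Ideal A := IsLocalRing.maximalIdeal A with h𝔪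
  set K := A ⧸ 𝔪 with hK
  set V := (↥J) ⧸ (𝔪 • ⊤ : Submodule A ↥J) with hV
  set q : ↥J →ₗ[A] V := Submodule.mkQ _ with hq
  have hsmul : ∀ (c : A) (w : V), (Ideal.Quotient.mk 𝔪 c) • w = c • w := by
    intro c w
    obtain ⟨z, rfl⟩ := Submodule.Quotient.mk_surjective _ w
    rw [Module.Quotient.mk_smul_mk, ← Submodule.Quotient.mk_smul]
  have hspan : ∀ (s : Set V) (w : V), w ∈ span A s ↔ w ∈ span K s := by
    intro s w
    constructor
    · intro h
      induction h using Submodule.span_induction with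
      | mem z hz => exact subset_span hz
      | zero => exact zero_mem _
      | add _ _ _ _ h1 h2 => exact add_mem h1 h2
      | smul c z _ h1 => rw [← hsmul c z]; exact Submodule.smul_mem _ _ h1
    · intro h
      induction h using Submodule.span_induction with
      | mem z hz => exact subset_span hz
      | zero => exact zero_mem _
      | add _ _ _ _ h1 h2 => exact add_mem h1 h2
      | smul c z _ h1 =>
          obtain ⟨c', rfl⟩ := Ideal.Quotient.mk_surjective c
          rw [hsmul c' z]; exact Submodule.smul_mem _ _ h1
  -- images of the small generating set span V over K
  set τ : {z : A // z ∈ t} → ↥J := fun z => ⟨z.1, hts ▸ subset_span z.2⟩ with hτ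
  have hinj := Submodule.map_injective_of_injective (injective_subtype J)
  have hτA : span A (Set.range τ) = ⊤ := by
    apply hinj
    rw [Submodule.map_span, Submodule.map_top, Submodule.range_subtype]
    have : J.subtype '' (Set.range τ) = (t : Set A) := by
      ext z; constructor
      · rintro ⟨w, ⟨c, rfl⟩, rfl⟩; exact c.2
      · intro hz; exact ⟨τ ⟨z, hz⟩, ⟨⟨z, hz⟩, rfl⟩, rfl⟩
    rw [this]; exact hts
  have hτtop : span A (Set.range (q ∘ τ)) = ⊤ := by
    rw [Set.range_comp, Submodule.span_image, hτA, Submodule.map_top,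
      Submodule.range_mkQ]
  have hKtop : span K (Set.range (q ∘ τ)) = ⊤ := by
    rw [eq_top_iff]; intro w _
    exact (hspan _ w).mp (hτtop ▸ mem_top)
  haveI : Module.Finite K V := by
    rw [Module.finite_def, ← hKtop]
    exact fg_span (Set.finite_range _)
  have hfr : Module.finrank K V ≤ t.card := by
    have h1 := finrank_span_le_card (R := K) (Set.range (q ∘ τ))
    rw [hKtop, finrank_top] at h1
    refine h1.trans ?_
    rw [Set.toFinset_range]
    exact (Finset.card_image_le).trans (by simp [Fintype.card_coe])
  set ν : Fin n → ↥J := fun j => ⟨v j, hJ ▸ subset_span ⟨j, rfl⟩⟩ with hν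
  have hdep : ¬ LinearIndependent K (q ∘ ν) := by
    intro h
    have h2 := h.fintype_card_le_finrank
    rw [Fintype.card_fin] at h2
    omega
  letI : Field K := Ideal.Quotient.field 𝔪
  have hdep2 : ¬ ∀ i₀ : Fin n, (⇑q ∘ ν) i₀ ∉ span K ((⇑q ∘ ν) '' (Set.univ \ {i₀})) :=
    fun h => hdep (linearIndependent_iff_notMem_span.mpr h)
  push_neg at hdep2
  obtain ⟨i, hi⟩ := hdep2
  -- translate back to A
  set s₀ : Set ↥J := ν '' (Set.univ \ {i}) with hs₀
  have him : (q ∘ ν) '' (Set.univ \ {i}) = q '' s₀ := by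
    rw [hs₀, Set.image_image]; rfl
  rw [him] at hi
  have hi' : q (ν i) ∈ span A (q '' s₀) := (hspan _ _).mpr hi
  rw [Submodule.span_image] at hi'
  obtain ⟨z, hz, hqz⟩ := hi'
  have hker : ν i - z ∈ (𝔪 • ⊤ : Submodule A ↥J) := by
    rw [← Submodule.ker_mkQ (𝔪 • ⊤ : Submodule A ↥J), LinearMap.mem_ker,
      map_sub, sub_eq_zero]
    exact (hqz).symm
  have hmap : Submodule.map J.subtype (𝔪 • ⊤ : Submodule A ↥J) = 𝔪 • J := by
    rw [Submodule.map_smul'', Submodule.map_top, Submodule.range_subtype]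
  have h2 : v i - (z : A) ∈ 𝔪 • J := by
    rw [← hmap]
    exact ⟨ν i - z, hker, rfl⟩
  set N₁ : Ideal A := Ideal.span (v '' (Set.univ \ {i})) with hN₁
  have h3 : (z : A) ∈ N₁ := by
    have := Submodule.mem_map_of_mem (f := J.subtype) hz
    rw [Submodule.map_span] at this
    have heq : J.subtype '' s₀ = v '' (Set.univ \ {i}) := by
      rw [hs₀, Set.image_image]; rfl
    rwa [heq] at this
  have h4 : J ≤ N₁ ⊔ 𝔪 • J := by
    rw [hJ, Ideal.span_le]
    rintro _ ⟨j, rfl⟩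
    by_cases hji : j = i
    · subst hji
      have : v j = (z : A) + (v j - (z : A)) := by ring
      rw [this]
      exact add_mem (Submodule.mem_sup_left h3) (Submodule.mem_sup_right h2)
    · exact Submodule.mem_sup_left (subset_span ⟨j, ⟨trivial, hji⟩, rfl⟩)
  have h5 : J ≤ N₁ := by
    refine Submodule.le_of_le_smul_of_le_jacobson_bot ?_ ?_ h4
    · rw [hJ]; exact fg_span (Set.finite_range v)
    · rw [IsLocalRing.jacobson_eq_maximalIdeal ⊥ bot_ne_top]
  have h6 : v i ∈ N₁ := h5 (hJ ▸ subset_span ⟨i, rfl⟩)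
  -- back to R
  have h7 : π (a i) ∈ Ideal.map π (Ideal.span (a '' (Set.univ \ {i}))) := by
    rw [Ideal.map_span, Set.image_image]
    exact h6
  obtain ⟨b, hb, hπb⟩ := (Ideal.mem_map_iff_of_surjective π
    Ideal.Quotient.mk_surjective).mp h7
  have h8 : a i - b ∈ Ideal.span ({x, y} : Set R) := by
    have : π (a i - b) = 0 := by rw [map_sub, hπb, sub_self]
    rwa [← RingHom.mem_ker, Ideal.mk_ker] at this
  -- extract explicit coefficients
  set g : (Fin n) ⊕ (Fin 2) → R :=
    Sum.elim (fun j => if j = i then 0 else a j) (fun l => if l = 0 then x else y) with hg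
  have h9 : a i ∈ Ideal.span (Set.range g) := by
    have hrw : a i = b + (a i - b) := by ring
    rw [hrw]
    refine add_mem ?_ ?_
    · refine Ideal.span_le.mpr ?_ hb
      rintro _ ⟨j, ⟨_, hji⟩, rfl⟩
      refine subset_span ⟨Sum.inl j, ?_⟩
      simp only [hg, Sum.elim_inl, if_neg (by simpa using hji)]
    · refine Ideal.span_le.mpr ?_ h8
      rintro z (rfl | rfl)
      · exact subset_span ⟨Sum.inr 0, by simp [hg]⟩
      · exact subset_span ⟨Sum.inr 1, by simp [hg]⟩
  obtain ⟨c, hc⟩ := (mem_span_range_iff_exists_fun R).mp h9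
  refine ⟨i, fun j => if j = i then 0 else c (Sum.inl j), by simp, c (Sum.inr 0), c (Sum.inr 1), ?_⟩
  have hL : ∑ j, (if j = i then 0 else c (Sum.inl j)) * a j
      = ∑ j, c (Sum.inl j) • g (Sum.inl j) := by
    refine Finset.sum_congr rfl fun j _ => ?_
    by_cases hji : j = i
    · subst hji; simp [hg]
    · simp [hg, hji]
  rw [← hc, Fintype.sum_sum_type, Fin.sum_univ_two, hL]
  simp only [hg, Sum.elim_inr, smul_eq_mul]
  norm_num
  ring


/-- **Proposition 3.5.**  Let `(R, m, k)` be a commutative Noetherian local ring and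
`x, y ∈ m`.  For any integer `n > s(x,y)` and any exact sequence
`0 → (R/(x))^n → M → R/(y) → 0`, the module `M` has a direct summand isomorphic to
`R/(x)`; in particular `M` is decomposable. -/
theorem summand_of_large_extension (R : Type u) [CommRing R] [IsNoetherianRing R]
    [IsLocalRing R] (x y : R)
    (hx : x ∈ IsLocalRing.maximalIdeal R) (hy : y ∈ IsLocalRing.maximalIdeal R)
    (n : ℕ) (hn : sInvariant R x y < (n : ℕ∞))
    (M : Type u) [AddCommGroup M] [Module R M]
    (f : (Fin n → R ⧸ Ideal.span ({x} : Set R)) →ₗ[R] M)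
    (g : M →ₗ[R] R ⧸ Ideal.span ({y} : Set R))
    (hf : Function.Injective f) (hg : Function.Surjective g)
    (hfg : LinearMap.range f = LinearMap.ker g) :
    ∃ P Q : Submodule R M, IsCompl P Q ∧
      Nonempty (P ≃ₗ[R] R ⧸ Ideal.span ({x} : Set R)) ∧
      P ≠ ⊥ ∧ Q ≠ ⊥ := by
  classical
  set B := R ⧸ Ideal.span ({x} : Set R) with hB
  set C := R ⧸ Ideal.span ({y} : Set R) with hC
  set mkx : R →+* B := Ideal.Quotient.mk _ with hmkx
  set mky : R →+* C := Ideal.Quotient.mk _ with hmky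
  have hxT : Ideal.span ({x} : Set R) ≠ ⊤ := fun h =>
    (IsLocalRing.maximalIdeal.isMaximal R).ne_top (top_le_iff.mp
      (h ▸ (Ideal.span_le.mpr (by rintro z rfl; exact hx))))
  have hyT : Ideal.span ({y} : Set R) ≠ ⊤ := fun h =>
    (IsLocalRing.maximalIdeal.isMaximal R).ne_top (top_le_iff.mp
      (h ▸ (Ideal.span_le.mpr (by rintro z rfl; exact hy))))
  haveI : Nontrivial B := Ideal.Quotient.nontrivial_iff.mpr hxT
  haveI : Nontrivial C := Ideal.Quotient.nontrivial_iff.mpr hyT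
  -- basic smul facts on quotients
  have honeB : ∀ c : R, c • (1 : B) = mkx c := by
    intro c
    have h : c • (mkx 1) = mkx (c * 1) := rfl
    rw [mul_one] at h
    exact h
  have honeC : ∀ c : R, c • (1 : C) = mky c := by
    intro c
    have h : c • (mky 1) = mky (c * 1) := rfl
    rw [mul_one] at h
    exact h
  have hmulB : ∀ (c : R) (b : B), c • b = mkx c * b := by
    intro c b
    obtain ⟨s, rfl⟩ := Ideal.Quotient.mk_surjective b
    rw [← map_mul]; rfl
  -- set up the extension data
  obtain ⟨m₀, hm₀⟩ := hg 1
  have hym₀ : y • m₀ ∈ LinearMap.ker g := by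
    rw [LinearMap.mem_ker, map_smul, hm₀, honeC,
      Ideal.Quotient.eq_zero_iff_mem]
    exact subset_span rfl
  rw [← hfg] at hym₀
  obtain ⟨vv, hvv⟩ := hym₀
  choose a ha using fun j => Ideal.Quotient.mk_surjective (vv j)
  obtain ⟨i, r, hri, α, β, hai⟩ := nakayama_step R x y hx hy n hn a
  set ε : Fin n → (Fin n → B) := fun j => Pi.single j 1 with hε
  have hsing : ∀ (c : R) (j : Fin n), c • ε j = Pi.single j (mkx c) := by
    intro c j
    funext k
    simp only [hε]
    by_cases hk : k = j
    · subst hk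
      rw [Pi.smul_apply, Pi.single_eq_same, Pi.single_eq_same, honeB]
    · rw [Pi.smul_apply, Pi.single_eq_of_ne hk, Pi.single_eq_of_ne hk, smul_zero]
  set u : M := f (ε i) with hu
  set ψ : R →ₗ[R] M := LinearMap.toSpanSingleton R M u with hψdef
  have hψ : ∀ c : R, ψ c = c • u := fun c => rfl
  have hcu : ∀ c : R, c • u = f (Pi.single i (mkx c)) := by
    intro c; rw [hu, ← map_smul, hsing]
  set P : Submodule R M := LinearMap.range ψ with hP
  have hker : LinearMap.ker ψ = (Ideal.span ({x} : Set R) : Submodule R R) := by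
    ext c
    rw [LinearMap.mem_ker, hψ, hcu]
    constructor
    · intro h
      have h2 : Pi.single i (mkx c) = (0 : Fin n → B) := by
        apply hf; rw [h, map_zero]
      have h3 := congrFun h2 i
      rw [Pi.single_eq_same] at h3
      rwa [← Ideal.Quotient.eq_zero_iff_mem]
    · intro h
      rw [← Ideal.Quotient.eq_zero_iff_mem (I := Ideal.span ({x} : Set R))] at h
      rw [show mkx c = 0 from h, Pi.single_zero, map_zero]
  set m₁ : M := m₀ - β • u with hm₁
  have hgu : g u = 0 := by
    rw [← LinearMap.mem_ker, ← hfg]; exact ⟨ε i, rfl⟩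
  have hgm₁ : g m₁ = 1 := by
    rw [hm₁, map_sub, map_smul, hgu, smul_zero, sub_zero, hm₀]
  set e' : Fin n → (Fin n → B) := fun j => ε j + r j • ε i with he'
  have he'i : e' i = ε i := by rw [he']; simp [hri]
  set E : Submodule R (Fin n → B) := span R (e' '' (Set.univ \ {i})) with hE
  set Q : Submodule R M := E.map f ⊔ (R ∙ m₁) with hQ
  -- the coordinate functional
  set φ : (Fin n → B) →ₗ[R] B :=
    { toFun := fun z => z i - ∑ j, (mkx (r j)) * z j
      map_add' := by
        intro z w
        simp only [Pi.add_apply, mul_add, Finset.sum_add_distrib]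
        ring
      map_smul' := by
        intro c z
        simp only [Pi.smul_apply, RingHom.id_apply, hmulB]
        rw [mul_sub, Finset.mul_sum]
        congr 1
        exact Finset.sum_congr rfl fun j _ => by ring } with hφ
  have hφsingle : ∀ (j : Fin n) (b : B),
      φ (Pi.single j b) = (if j = i then b else 0) - mkx (r j) * b := by
    intro j b
    have h1 : ∑ k, mkx (r k) * (Pi.single j b : Fin n → B) k = mkx (r j) * b := by
      rw [Finset.sum_eq_single j]
      · rw [Pi.single_eq_same]
      · intro k _ hk
        rw [Pi.single_eq_of_ne hk, mul_zero]
      · intro h; exact absurd (Finset.mem_univ j) h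
    show (Pi.single j b : Fin n → B) i - _ = _
    rw [h1, Pi.single_apply]
    congr 1
    simp [eq_comm]
  have hφε : φ (ε i) = 1 := by
    rw [hε]
    show φ (Pi.single i (1:B)) = 1
    rw [hφsingle, if_pos rfl, hri, map_zero, zero_mul, sub_zero]
  have hφe' : ∀ j, j ≠ i → φ (e' j) = 0 := by
    intro j hj
    rw [he']
    show φ (ε j + r j • ε i) = 0
    rw [map_add, hsing, hε]
    show φ (Pi.single j (1:B)) + φ (Pi.single i (mkx (r j))) = 0
    rw [hφsingle, hφsingle, if_neg hj, if_pos rfl, hri, map_zero, zero_mul,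
      mul_one, sub_zero]
    ring
  have hEker : ∀ z ∈ E, φ z = 0 := by
    intro z hz
    have : E ≤ LinearMap.ker φ := by
      rw [hE, span_le]
      rintro _ ⟨j, ⟨-, hj⟩, rfl⟩
      exact hφe' j hj
    exact this hz
  -- the element w with y • m₁ = f w
  set w : Fin n → B := ∑ j ∈ Finset.univ.erase i, a j • e' j with hw
  have hwE : w ∈ E := by
    refine sum_mem fun j hj => ?_
    exact smul_mem _ _ (subset_span ⟨j, ⟨trivial, (Finset.mem_erase.mp hj).1⟩, rfl⟩)
  have hvvsum : vv = ∑ j, a j • ε j := by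
    have h2 : (∑ j, a j • ε j) = ∑ j, Pi.single j (mkx (a j)) :=
      Finset.sum_congr rfl fun j _ => hsing _ _
    rw [h2, Finset.univ_sum_single]
    funext k
    exact (ha k).symm
  have hkey : vv = w + (β * y) • ε i := by
    rw [hvvsum, ← Finset.sum_erase_add _ _ (Finset.mem_univ i), hw]
    have h2 : ∀ j, a j • e' j = a j • ε j + (a j * r j) • ε i := by
      intro j
      rw [he']
      show a j • (ε j + r j • ε i) = _
      rw [smul_add, smul_smul]
    rw [Finset.sum_congr rfl fun j _ => h2 j, Finset.sum_add_distrib, ← Finset.sum_smul]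
    rw [add_assoc]
    congr 1
    rw [hsing, ← add_smul, hsing]
    refine congrArg (Pi.single i) (Ideal.Quotient.eq.mpr ?_)
    have h3 : ∑ j, r j * a j = ∑ j ∈ Finset.univ.erase i, a j * r j := by
      rw [← Finset.sum_erase (f := fun j => r j * a j) Finset.univ (by show r i * a i = 0; rw [hri, zero_mul])]
      exact Finset.sum_congr rfl fun j _ => mul_comm _ _
    have h4 : a i - (∑ j ∈ Finset.univ.erase i, a j * r j + β * y) = α * x := by
      rw [hai, h3]; ring
    rw [h4]
    exact Ideal.mem_span_singleton.mpr ⟨α, mul_comm _ _⟩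
  have hym₁ : y • m₁ = f w := by
    rw [hm₁, smul_sub, ← hvv, hkey, map_add, smul_smul]
    rw [← map_smul, hsing, hsing]
    rw [show y * β = β * y from mul_comm _ _]
    abel
  -- disjointness
  have hdisj : Disjoint P Q := by
    rw [Submodule.disjoint_def]
    intro p hp hq
    obtain ⟨c, rfl⟩ := hp
    rw [hQ] at hq
    obtain ⟨q₁, hq₁, q₂, hq₂, hsum⟩ := Submodule.mem_sup.mp hq
    obtain ⟨z, hz, rfl⟩ := hq₁
    obtain ⟨d, rfl⟩ := Submodule.mem_span_singleton.mp hq₂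
    -- apply g
    have hgp : g (ψ c) = 0 := by
      rw [hψ, map_smul, hgu, smul_zero]
    have hgz : g (f z) = 0 := by
      rw [← LinearMap.mem_ker, ← hfg]; exact ⟨z, rfl⟩
    have hd : mky d = 0 := by
      have := congrArg g hsum
      rw [hgp, map_add, hgz, zero_add, map_smul, hgm₁, honeC] at this
      exact this
    obtain ⟨d', hd'⟩ := Ideal.mem_span_singleton.mp
      (Ideal.Quotient.eq_zero_iff_mem.mp hd)
    have hdm₁ : d • m₁ = f (d' • w) := by
      rw [hd', map_smul, ← hym₁, smul_smul, mul_comm]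
    have heq : ψ c = f (z + d' • w) := by
      rw [map_add, ← hdm₁, hsum]
    have heq2 : Pi.single i (mkx c) = z + d' • w := by
      apply hf
      rw [← hcu, ← hψ, heq]
    have hφboth := congrArg φ heq2
    rw [map_add, map_smul, hEker z hz, hEker w hwE, smul_zero, add_zero] at hφboth
    rw [hφsingle, if_pos rfl, hri, map_zero, zero_mul, sub_zero] at hφboth
    have hc : c ∈ Ideal.span ({x} : Set R) := by
      rwa [← Ideal.Quotient.eq_zero_iff_mem (I := Ideal.span ({x} : Set R)),
        ← hmkx]
    have hcker : c ∈ LinearMap.ker ψ := by rw [hker]; exact hc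
    exact LinearMap.mem_ker.mp hcker
  -- codisjointness
  have hcodis : P ⊔ Q = ⊤ := by
    rw [eq_top_iff]
    rintro m -
    obtain ⟨c, hc⟩ := Ideal.Quotient.mk_surjective (g m)
    have h1 : m - c • m₁ ∈ LinearMap.ker g := by
      rw [LinearMap.mem_ker, map_sub, map_smul, hgm₁, honeC, hc, sub_self]
    rw [← hfg] at h1
    obtain ⟨z, hz⟩ := h1
    choose b hb using fun k => Ideal.Quotient.mk_surjective (z k)
    have hzsum : z = ∑ j, b j • ε j := by
      have h2 : (∑ j, b j • ε j) = ∑ j, Pi.single j (mkx (b j)) :=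
        Finset.sum_congr rfl fun j _ => hsing _ _
      rw [h2, Finset.univ_sum_single]
      funext k
      exact (hb k).symm
    have huP : u ∈ P ⊔ Q := Submodule.mem_sup_left ⟨1, by rw [hψ, one_smul]⟩
    have hfe' : ∀ j, f (e' j) ∈ P ⊔ Q := by
      intro j
      by_cases hj : j = i
      · subst hj
        rw [he'i]
        exact Submodule.mem_sup_left ⟨1, by rw [hψ, one_smul]⟩
      · refine Submodule.mem_sup_right (Submodule.mem_sup_left ?_)
        exact ⟨e' j, subset_span ⟨j, ⟨trivial, hj⟩, rfl⟩, rfl⟩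
    have hufz : f z ∈ P ⊔ Q := by
      have hfz : f z = (∑ j, b j • f (e' j)) - (∑ j, b j * r j) • u := by
        rw [hzsum, map_sum]
        have h3 : ∀ j, f (b j • ε j) = b j • f (e' j) - (b j * r j) • u := by
          intro j
          have h4 : ε j = e' j - r j • ε i := by
            rw [he']
            show ε j = (ε j + r j • ε i) - r j • ε i
            rw [add_sub_cancel_right]
          rw [map_smul, h4, map_sub, map_smul, ← hu, smul_sub, smul_smul]
        rw [Finset.sum_congr rfl fun j _ => h3 j, Finset.sum_sub_distrib,
          ← Finset.sum_smul]
      rw [hfz]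
      exact sub_mem (sum_mem fun j _ => smul_mem _ _ (hfe' j)) (smul_mem _ _ huP)
    have hm : m = c • m₁ + f z := by rw [hz]; abel
    rw [hm]
    refine add_mem (Submodule.smul_mem _ _ ?_) hufz
    exact Submodule.mem_sup_right (Submodule.mem_sup_right
      (Submodule.mem_span_singleton_self m₁))
  refine ⟨P, Q, ⟨hdisj, codisjoint_iff.mpr hcodis⟩, ?_, ?_, ?_⟩
  · exact ⟨((Submodule.quotEquivOfEq _ _ hker.symm).trans ψ.quotKerEquivRange).symm⟩
  · intro hbot
    have hu0 : u ∈ P := ⟨1, by rw [hψ, one_smul]⟩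
    rw [hbot, Submodule.mem_bot] at hu0
    have h5 : ε i = 0 := hf (by rw [← hu, hu0, map_zero])
    have h6 := congrFun h5 i
    simp only [hε, Pi.single_eq_same, Pi.zero_apply] at h6
    exact one_ne_zero h6
  · intro hbot
    have hm₁Q : m₁ ∈ Q := Submodule.mem_sup_right
      (Submodule.mem_span_singleton_self m₁)
    rw [hbot, Submodule.mem_bot] at hm₁Q
    rw [hm₁Q, map_zero] at hgm₁
    exact one_ne_zero hgm₁.symm
end

section
/- Let (R, m, k) be a commutative Noetherian local ring and let n be a positive integer. Let x₁, …, xₙ, y ∈ m be elements such that the ideal (x₁, …, xₙ, y) has minimal number of generators equal to n + 1. If p, q ∈ R satisfy the equality of ideals (x₁ + p·y, x₂, …, xₙ) = (x₁ + q·y, x₂, …, xₙ), then the images of p and q in the residue field k = R/m are equal. -/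
open CategoryTheory

universe u

/-- **Lemma 3.8.**  Let `(R, m, k)` be a commutative Noetherian local ring, `n ≥ 1`, and
`x₁, …, xₙ, y ∈ m` with `ν_R(x₁, …, xₙ, y) = n + 1`.  If `p, q ∈ R` satisfy
`(x₁ + p·y, x₂, …, xₙ) = (x₁ + q·y, x₂, …, xₙ)`, then `p` and `q` have the same image in
the residue field `k = R/m`. -/
theorem residue_eq_of_ideal_eq (R : Type u) [CommRing R] [IsNoetherianRing R]
    [IsLocalRing R] (n : ℕ) (hn : 0 < n)
    (x : Fin n → R) (y : R)
    (hxm : ∀ i, x i ∈ IsLocalRing.maximalIdeal R)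
    (hym : y ∈ IsLocalRing.maximalIdeal R)
    (hnu : nu R (Ideal.span (Set.range x ∪ {y})) = n + 1)
    (p q : R)
    (hpq : Ideal.span (Set.range (Function.update x ⟨0, hn⟩ (x ⟨0, hn⟩ + p * y)))
         = Ideal.span (Set.range (Function.update x ⟨0, hn⟩ (x ⟨0, hn⟩ + q * y)))) :
    IsLocalRing.residue R p = IsLocalRing.residue R q := by
  classical
  by_contra hne
  have hunit : IsUnit (p - q) := by
    by_contra hu
    exact hne (Ideal.Quotient.eq.mpr ((IsLocalRing.mem_maximalIdeal _).mpr (mem_nonunits_iff.mpr hu)))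
  set f : Fin n → R := Function.update x ⟨0, hn⟩ (x ⟨0, hn⟩ + p * y) with hf
  set I := Ideal.span (Set.range f) with hIdef
  have hx1p : x ⟨0, hn⟩ + p * y ∈ I :=
    Ideal.subset_span ⟨⟨0, hn⟩, Function.update_self _ _ _⟩
  have hx1q : x ⟨0, hn⟩ + q * y ∈ I := by
    rw [hpq]
    exact Ideal.subset_span ⟨⟨0, hn⟩, Function.update_self _ _ _⟩
  have hdiff : (p - q) * y ∈ I := by
    have h := I.sub_mem hx1p hx1q
    have : (x ⟨0, hn⟩ + p * y) - (x ⟨0, hn⟩ + q * y) = (p - q) * y := by ring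
    rwa [this] at h
  have hy : y ∈ I := (Ideal.unit_mul_mem_iff_mem I hunit).mp hdiff
  have hx0 : x ⟨0, hn⟩ ∈ I := by
    have h := I.sub_mem hx1p (I.mul_mem_left p hy)
    have : (x ⟨0, hn⟩ + p * y) - p * y = x ⟨0, hn⟩ := by ring
    rwa [this] at h
  have hxall : ∀ i, x i ∈ I := by
    intro i
    by_cases h : i = ⟨0, hn⟩
    · subst h; exact hx0
    · have hupd : f i = x i := Function.update_of_ne h _ _
      rw [← hupd]; exact Ideal.subset_span ⟨i, rfl⟩
  have heq : Ideal.span (Set.range x ∪ {y}) = I := by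
    apply le_antisymm
    · rw [Ideal.span_le]
      rintro z (⟨i, rfl⟩ | rfl)
      · exact hxall i
      · exact hy
    · rw [Ideal.span_le]
      rintro z ⟨i, rfl⟩
      by_cases h : i = ⟨0, hn⟩
      · subst h
        rw [hf, Function.update_self]
        exact Ideal.add_mem _
          (Ideal.subset_span (Or.inl ⟨⟨0, hn⟩, rfl⟩))
          (Ideal.mul_mem_left _ p (Ideal.subset_span (Or.inr rfl)))
      · rw [hf, Function.update_of_ne h]
        exact Ideal.subset_span (Or.inl ⟨i, rfl⟩)
  have hmem : (Finset.image f Finset.univ).card ∈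
      {m : ℕ | ∃ s : Finset R, s.card = m ∧ Ideal.span (s : Set R) = I} :=
    ⟨Finset.image f Finset.univ, rfl, by
      rw [Finset.coe_image, Finset.coe_univ, Set.image_univ]⟩
  have hle : nu R I ≤ n := by
    refine le_trans (Nat.sInf_le hmem) ?_
    exact le_trans Finset.card_image_le (by simp)
  rw [heq] at hnu
  omega
end
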